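/- arXiv:1010.4672 — 6 statements merged into one kernel-verified Lean document; each statement's English description precedes it below -/
import Mathlib

section
/- Let R be an ε-approximate bisimulation relation between T₁ and T₂, and let S₂ be a safety controller for T₂ with specification C_ε(O_s). Then the controller S₁ for T₁ defined by S₁(q₁) = ⋃_{q₂ : (q₁,q₂) ∈ R} S₂(q₂) is a well-defined safety controller for T₁ with specification O_s. -/
open Set

/-- φ-contraction of a set in a metric space. -/
def contr {O : Type*} [MetricSpace O] (φ : ℝ) (s : Set O) : Set O :=
  {o' | o' ∈ s ∧ ∀ o : O, dist o o' ≤ φ → o ∈ s}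

/-- φ-expansion of a set in a metric space. -/
def expan {O : Type*} [MetricSpace O] (φ : ℝ) (s : Set O) : Set O :=
  {o : O | ∃ o' ∈ s, dist o o' ≤ φ}

/-- Enabled actions of a transition system given by δ. -/
def Enab {Q L : Type*} (δ : Q → L → Set Q) (q : Q) : Set L := {l | (δ q l).Nonempty}

/-- A trajectory of length N of the controlled system T_S. -/
def IsTraj {Q L : Type*} (δ : Q → L → Set Q) (S : Q → Set L) (N : ℕ)
    (q : ℕ → Q) (l : ℕ → L) : Prop :=
  ∀ i < N, l i ∈ S (q i) ∧ q (i + 1) ∈ δ (q i) (l i)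

/-- ε-approximate bisimulation relation. -/
def ApproxBisim {Q₁ Q₂ L O : Type*} [MetricSpace O] (ε : ℝ)
    (δ₁ : Q₁ → L → Set Q₁) (H₁ : Q₁ → O)
    (δ₂ : Q₂ → L → Set Q₂) (H₂ : Q₂ → O) (R : Set (Q₁ × Q₂)) : Prop :=
  ∀ p ∈ R, dist (H₁ p.1) (H₂ p.2) ≤ ε ∧
    (∀ l : L, ∀ q₁' ∈ δ₁ p.1 l, ∃ q₂' ∈ δ₂ p.2 l, (q₁', q₂') ∈ R) ∧
    (∀ l : L, ∀ q₂' ∈ δ₂ p.2 l, ∃ q₁' ∈ δ₁ p.1 l, (q₁', q₂') ∈ R)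

/-- Safety controller (characterization of Lemma 3.1). -/
def SafetyController {Q L O : Type*} (δ : Q → L → Set Q) (H : Q → O)
    (S : Q → Set L) (Os : Set O) : Prop :=
  ∀ q : Q, (S q).Nonempty → H q ∈ Os ∧ ∀ l ∈ S q, ∀ q' ∈ δ q l, (S q').Nonempty

/-- The reachability condition on a trajectory of length N. -/
def Reached {Q O : Type*} (H : Q → O) (Os Ot : Set O) (N : ℕ) (q : ℕ → Q) : Prop :=
  ∃ K ≤ N, (∀ k ≤ K, H (q k) ∈ Os) ∧ H (q K) ∈ Ot

/-- Entry time of the controlled system T_S from q₀ for specification (Os, Ot). -/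
noncomputable def entryTime {Q L O : Type*} (δ : Q → L → Set Q) (S : Q → Set L)
    (H : Q → O) (Os Ot : Set O) (q₀ : Q) : ℕ∞ :=
  sInf {n : ℕ∞ | ∃ N : ℕ, n = (N : ℕ∞) ∧
    ∀ (q : ℕ → Q) (l : ℕ → L), q 0 = q₀ → IsTraj δ S N q l → Reached H Os Ot N q}

/-- An everywhere non-empty, well-defined controller. -/
def IsController {Q L : Type*} (δ : Q → L → Set Q) (S : Q → Set L) : Prop :=
  (∀ q, (S q).Nonempty) ∧ ∀ q, S q ⊆ Enab δ q

/-- Time-optimal controller for reachability specification (Os, Ot). -/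
def TimeOptimal {Q L O : Type*} (δ : Q → L → Set Q) (H : Q → O) (S : Q → Set L)
    (Os Ot : Set O) : Prop :=
  IsController δ S ∧ ∀ S' : Q → Set L, IsController δ S' →
    ∀ q, entryTime δ S H Os Ot q ≤ entryTime δ S' H Os Ot q

/-- Maximal safety controller. -/
def MaximalSafety {Q L O : Type*} (δ : Q → L → Set Q) (H : Q → O) (S : Q → Set L)
    (Os : Set O) : Prop :=
  SafetyController δ H S Os ∧
    ∀ S' : Q → Set L, SafetyController δ H S' Os → ∀ q, S' q ⊆ S q

/-- ε-approximate bisimilarity of two transition systems. -/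
def ApproxBisimilar {Q₁ Q₂ L O : Type*} [MetricSpace O] (ε : ℝ)
    (δ₁ : Q₁ → L → Set Q₁) (H₁ : Q₁ → O)
    (δ₂ : Q₂ → L → Set Q₂) (H₂ : Q₂ → O) : Prop :=
  ∃ R : Set (Q₁ × Q₂), ApproxBisim ε δ₁ H₁ δ₂ H₂ R ∧
    (∀ q₁, ∃ q₂, (q₁, q₂) ∈ R) ∧ (∀ q₂, ∃ q₁, (q₁, q₂) ∈ R)

theorem safety_concretization {Q₁ Q₂ L O : Type*} [MetricSpace O]
    (ε : ℝ) (hε : 0 ≤ ε) (δ₁ : Q₁ → L → Set Q₁) (H₁ : Q₁ → O)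
    (δ₂ : Q₂ → L → Set Q₂) (H₂ : Q₂ → O) (R : Set (Q₁ × Q₂))
    (hR : ApproxBisim ε δ₁ H₁ δ₂ H₂ R) (Os : Set O) (S₂ : Q₂ → Set L)
    (hS₂wd : ∀ q₂, S₂ q₂ ⊆ Enab δ₂ q₂)
    (hS₂ : SafetyController δ₂ H₂ S₂ (contr ε Os)) :
    (∀ q₁ : Q₁, {l : L | ∃ q₂, (q₁, q₂) ∈ R ∧ l ∈ S₂ q₂} ⊆ Enab δ₁ q₁) ∧
    SafetyController δ₁ H₁ (fun q₁ => {l : L | ∃ q₂, (q₁, q₂) ∈ R ∧ l ∈ S₂ q₂}) Os := by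
  constructor
  · rintro q₁ l ⟨q₂, hRq, hl⟩
    obtain ⟨q₂', hq₂'⟩ := hS₂wd q₂ hl
    obtain ⟨q₁', hq₁', -⟩ := (hR _ hRq).2.2 l q₂' hq₂'
    exact ⟨q₁', hq₁'⟩
  · rintro q₁ ⟨l, q₂, hRq, hl⟩
    obtain ⟨hHq₂, hsafe⟩ := hS₂ q₂ ⟨l, hl⟩
    constructor
    · exact hHq₂.2 (H₁ q₁) (hR _ hRq).1
    · rintro l' ⟨q₂', hRq', hl'⟩ q₁' hq₁'
      obtain ⟨q₂'', hq₂'', hR''⟩ := (hR _ hRq').2.1 l' q₁' hq₁'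
      obtain ⟨hHq₂', hsafe'⟩ := hS₂ q₂' ⟨l', hl'⟩
      obtain ⟨l'', hl''⟩ := hsafe' l' hl' q₂'' hq₂''
      exact ⟨l'', q₂'', hR'', hl''⟩
end

section
/- The pointwise union of an arbitrary family of safety controllers for specification O_s is itself a safety controller for O_s; consequently, the maximal safety controller for specification O_s exists and is unique. -/
open Set

/-- Safety controller including well-definedness (context of Statement 10). -/
def SafetyControllerWD {Q L O : Type*} (δ : Q → L → Set Q) (H : Q → O)
    (S : Q → Set L) (Os : Set O) : Prop :=
  ∀ q : Q, (S q).Nonempty →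
    S q ⊆ Enab δ q ∧ H q ∈ Os ∧ ∀ l ∈ S q, ∀ q' ∈ δ q l, (S q').Nonempty


lemma union_safety_aux {Q L O : Type*} (δ : Q → L → Set Q) (H : Q → O) (Os : Set O)
    (ι : Type*) (F : ι → Q → Set L) (hF : ∀ i, SafetyControllerWD δ H (F i) Os) :
    SafetyControllerWD δ H (fun q => ⋃ i, F i q) Os := by
  intro q hq
  obtain ⟨l, hl⟩ := hq
  simp only [mem_iUnion] at hl
  obtain ⟨i, hli⟩ := hl
  refine ⟨?_, (hF i q ⟨l, hli⟩).2.1, ?_⟩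
  · intro l' hl'
    simp only [mem_iUnion] at hl'
    obtain ⟨j, hj⟩ := hl'
    exact (hF j q ⟨l', hj⟩).1 hj
  · intro l' hl' q' hq'
    simp only [mem_iUnion] at hl'
    obtain ⟨j, hj⟩ := hl'
    obtain ⟨l'', hl''⟩ := (hF j q ⟨l', hj⟩).2.2 l' hj q' hq'
    exact ⟨l'', mem_iUnion.2 ⟨j, hl''⟩⟩

theorem union_safety_and_maximal_exists_unique {Q L O : Type*}
    (δ : Q → L → Set Q) (H : Q → O) (Os : Set O) :
    (∀ (ι : Type*) (F : ι → Q → Set L), (∀ i, SafetyControllerWD δ H (F i) Os) →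
      SafetyControllerWD δ H (fun q => ⋃ i, F i q) Os) ∧
    (∃! Smax : Q → Set L, SafetyControllerWD δ H Smax Os ∧
      ∀ S : Q → Set L, SafetyControllerWD δ H S Os → ∀ q, S q ⊆ Smax q) := by
  refine ⟨fun ι F hF => union_safety_aux δ H Os ι F hF, ?_⟩
  refine ⟨fun q => ⋃ S : {S : Q → Set L // SafetyControllerWD δ H S Os}, (S : Q → Set L) q,
    ⟨union_safety_aux δ H Os _ _ (fun S => S.2), ?_⟩, ?_⟩
  · intro S hSa q l hl
    exact mem_iUnion.2 ⟨⟨S, hSa⟩, hl⟩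
  · rintro S' ⟨hS', hmax'⟩
    funext q
    apply Subset.antisymm
    · intro l hl
      exact mem_iUnion.2 ⟨⟨S', hS'⟩, hl⟩
    · intro l hl
      obtain ⟨T, hT⟩ := mem_iUnion.1 hl
      exact hmax' T T.2 q hT
end

section
/- Let T₁ ∼_ε T₂ via R. Let S*_{2,Cε} be the maximal safety controller for T₂ with specification C_ε(O_s), and let S₁ be its concretization S₁(q₁) = ⋃_{q₂ ∈ R(q₁)} S*_{2,Cε}(q₂). Let S*_{1,C2ε} be the maximal safety controller for T₁ with specification C_{2ε}(O_s). Then S*_{1,C2ε} ⪯ S₁, i.e., S*_{1,C2ε}(q₁) ⊆ S₁(q₁) for all q₁ ∈ Q₁. -/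
open Set

theorem maximal_contraction_lower_bound {Q₁ Q₂ L O : Type*} [MetricSpace O]
    (ε : ℝ) (hε : 0 ≤ ε) (δ₁ : Q₁ → L → Set Q₁) (H₁ : Q₁ → O)
    (δ₂ : Q₂ → L → Set Q₂) (H₂ : Q₂ → O) (R : Set (Q₁ × Q₂))
    (hR : ApproxBisim ε δ₁ H₁ δ₂ H₂ R)
    (hRtot₁ : ∀ q₁, ∃ q₂, (q₁, q₂) ∈ R) (hRtot₂ : ∀ q₂, ∃ q₁, (q₁, q₂) ∈ R)
    (Os : Set O) (S₂ : Q₂ → Set L)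
    (hS₂ : MaximalSafety δ₂ H₂ S₂ (contr ε Os))
    (S₁C2 : Q₁ → Set L)
    (hS₁C2 : MaximalSafety δ₁ H₁ S₁C2 (contr (2 * ε) Os)) :
    ∀ q₁ : Q₁, S₁C2 q₁ ⊆ {l : L | ∃ q₂, (q₁, q₂) ∈ R ∧ l ∈ S₂ q₂} := by
  -- Concretization of S₁C2 on T₂
  set S₂' : Q₂ → Set L := fun q₂ => {l | ∃ q₁, (q₁, q₂) ∈ R ∧ l ∈ S₁C2 q₁} with hS₂'def
  have hsafe : SafetyController δ₂ H₂ S₂' (contr ε Os) := by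
    intro q₂ ⟨l, q₁, hRq, hl⟩
    have h1 := hS₁C2.1 q₁ ⟨l, hl⟩
    obtain ⟨hdist, hfwd, hbwd⟩ := hR _ hRq
    constructor
    · obtain ⟨hOs, hcontr⟩ := h1.1
      refine ⟨hcontr _ (by rw [dist_comm] at hdist; linarith [hdist]), ?_⟩
      intro o ho
      have ht := dist_triangle o (H₂ q₂) (H₁ q₁)
      rw [dist_comm (H₂ q₂) (H₁ q₁)] at ht
      exact hcontr o (by simp only at hdist; linarith)
    · rintro l' ⟨q₁', hRq', hl'⟩ q₂' hq₂'
      obtain ⟨hdist', hfwd', hbwd'⟩ := hR _ hRq'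
      obtain ⟨q₁'', hq₁'', hRnew⟩ := hbwd' l' q₂' hq₂'
      obtain ⟨l'', hl''⟩ := (hS₁C2.1 q₁' ⟨l', hl'⟩).2 l' hl' q₁'' hq₁''
      exact ⟨l'', q₁'', hRnew, hl''⟩
  intro q₁ l hl
  obtain ⟨q₂, hRq⟩ := hRtot₁ q₁
  exact ⟨q₂, hRq, hS₂.2 S₂' hsafe q₂ ⟨q₁, hRq, hl⟩⟩
end

section
/- Let T₁ ∼_ε T₂ via R. Let S*₁ be the maximal safety controller for T₁ with specification O_s, let S*_{2,Eε} be the maximal safety controller for T₂ with specification E_ε(O_s), and let S_{1,E2ε}(q₁) = ⋃_{q₂ ∈ R(q₁)} S*_{2,Eε}(q₂). Then S*₁ ⪯ S_{1,E2ε}, and moreover S_{1,E2ε} is a safety controller for T₁ with specification E_{2ε}(O_s). -/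
open Set

theorem maximal_expansion_upper_bound {Q₁ Q₂ L O : Type*} [MetricSpace O]
    (ε : ℝ) (hε : 0 ≤ ε) (δ₁ : Q₁ → L → Set Q₁) (H₁ : Q₁ → O)
    (δ₂ : Q₂ → L → Set Q₂) (H₂ : Q₂ → O) (R : Set (Q₁ × Q₂))
    (hR : ApproxBisim ε δ₁ H₁ δ₂ H₂ R)
    (hRtot₁ : ∀ q₁, ∃ q₂, (q₁, q₂) ∈ R) (hRtot₂ : ∀ q₂, ∃ q₁, (q₁, q₂) ∈ R)
    (Os : Set O) (S₁ : Q₁ → Set L) (hS₁ : MaximalSafety δ₁ H₁ S₁ Os)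
    (S₂E : Q₂ → Set L) (hS₂E : MaximalSafety δ₂ H₂ S₂E (expan ε Os)) :
    (∀ q₁ : Q₁, S₁ q₁ ⊆ {l : L | ∃ q₂, (q₁, q₂) ∈ R ∧ l ∈ S₂E q₂}) ∧
    SafetyController δ₁ H₁ (fun q₁ => {l : L | ∃ q₂, (q₁, q₂) ∈ R ∧ l ∈ S₂E q₂})
      (expan (2 * ε) Os) := by
  constructor
  · -- Part 1: S₁ ⊆ refined controller
    -- Define a controller on Q₂ by concretizing S₁ through R⁻¹.
    set S' : Q₂ → Set L := fun q₂ => {l | ∃ q₁, (q₁, q₂) ∈ R ∧ l ∈ S₁ q₁} with hS'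
    have hsafe : SafetyController δ₂ H₂ S' (expan ε Os) := by
      intro q₂ ⟨l, q₁, hq₁R, hl⟩
      have hne : (S₁ q₁).Nonempty := ⟨l, hl⟩
      obtain ⟨hHOs, hsucc⟩ := hS₁.1 q₁ hne
      constructor
      · exact ⟨H₁ q₁, hHOs, by
          have := (hR _ hq₁R).1
          simpa [dist_comm] using this⟩
      · rintro l' ⟨q₁', hq₁'R, hl'⟩ q₂' hq₂'
        obtain ⟨q₁'', hq₁''δ, hq₁''R⟩ := (hR _ hq₁'R).2.2 l' q₂' hq₂'
        obtain ⟨l'', hl''⟩ := hS₁.1 q₁' ⟨l', hl'⟩ |>.2 l' hl' q₁'' hq₁''δ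
        exact ⟨l'', q₁'', hq₁''R, hl''⟩
    intro q₁ l hl
    obtain ⟨q₂, hq₂⟩ := hRtot₁ q₁
    exact ⟨q₂, hq₂, hS₂E.2 S' hsafe q₂ ⟨q₁, hq₂, hl⟩⟩
  · -- Part 2: refined controller is a safety controller for expan (2ε) Os
    intro q₁ ⟨l, q₂, hq₂R, hl⟩
    have hne : (S₂E q₂).Nonempty := ⟨l, hl⟩
    obtain ⟨hH₂, hsucc⟩ := hS₂E.1 q₂ hne
    constructor
    · obtain ⟨o, ho, hdo⟩ := hH₂
      refine ⟨o, ho, ?_⟩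
      have h1 := (hR _ hq₂R).1
      calc dist (H₁ q₁) o ≤ dist (H₁ q₁) (H₂ q₂) + dist (H₂ q₂) o := dist_triangle _ _ _
        _ ≤ ε + ε := add_le_add h1 hdo
        _ = 2 * ε := by ring
    · rintro l' ⟨q₂', hq₂'R, hl'⟩ q₁' hq₁'
      obtain ⟨q₂'', hq₂''δ, hq₂''R⟩ := (hR _ hq₂'R).2.1 l' q₁' hq₁'
      obtain ⟨l'', hl''⟩ := hS₂E.1 q₂' ⟨l', hl'⟩ |>.2 l' hl' q₂'' hq₂''δ
      exact ⟨l'', q₂'', hq₂''R, hl''⟩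
end

section
/- The entry time of a controlled transition system satisfies the dynamic programming recursion: for q ∉ H⁻¹(O_s), J(T_S, O_s, O_t, q) = +∞; for q ∈ H⁻¹(O_t), J(T_S, O_s, O_t, q) = 0; and for q ∈ H⁻¹(O_s) \ H⁻¹(O_t), J(T_S, O_s, O_t, q) = 1 + max_{q' ∈ δ(q, S(q))} J(T_S, O_s, O_t, q'). -/
open Set

/-!
Let `ReachesWithin q N` say that every trajectory of length `N` from `q` meets the
specification, so that `entryTime q ≤ N ↔ ReachesWithin q N`. From a state of `Os \ Ot`, a
trajectory of length `N + 1` meets the specification exactly when its tail does, hence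
`ReachesWithin q (N + 1)` holds iff `ReachesWithin q' N` holds for every successor `q'` under
`S`; comparing both sides of the recursion against every `N` gives the third case. From a state
outside `Os`, the non-blocking controller produces arbitrarily long trajectories, all failing at
time `0`.
-/

section EntryTime

variable {Q L O : Type*}

def ReachesWithin (δ : Q → L → Set Q) (S : Q → Set L) (H : Q → O) (Os Ot : Set O)
    (q₀ : Q) (N : ℕ) : Prop :=
  ∀ (q : ℕ → Q) (l : ℕ → L), q 0 = q₀ → IsTraj δ S N q l → Reached H Os Ot N q

variable {δ : Q → L → Set Q} {S : Q → Set L} {H : Q → O} {Os Ot : Set O}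

theorem IsTraj.mono {N N' : ℕ} {q : ℕ → Q} {l : ℕ → L} (h : IsTraj δ S N' q l) (hN : N ≤ N') :
    IsTraj δ S N q l :=
  fun i hi => h i (hi.trans_le hN)

theorem IsTraj.tail {N : ℕ} {q : ℕ → Q} {l : ℕ → L} (h : IsTraj δ S (N + 1) q l) :
    IsTraj δ S N (fun i => q (i + 1)) (fun i => l (i + 1)) :=
  fun i hi => h (i + 1) (by omega)

theorem IsTraj.cons {N : ℕ} {q₀ : Q} {l₀ : L} {q : ℕ → Q} {l : ℕ → L}
    (hl₀ : l₀ ∈ S q₀) (hq₀ : q 0 ∈ δ q₀ l₀) (h : IsTraj δ S N q l) :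
    IsTraj δ S (N + 1) (fun | 0 => q₀ | i + 1 => q i) (fun | 0 => l₀ | i + 1 => l i)
  | 0, _ => ⟨hl₀, hq₀⟩
  | i + 1, hi => h i (by omega)

theorem exists_forall_isTraj (hS : ∀ q, (S q).Nonempty) (hSδ : ∀ q, S q ⊆ Enab δ q) (q₀ : Q) :
    ∃ (q : ℕ → Q) (l : ℕ → L), q 0 = q₀ ∧ ∀ N, IsTraj δ S N q l := by
  have hstep : ∀ p : Q, ∃ x : L × Q, x.1 ∈ S p ∧ x.2 ∈ δ p x.1 := fun p =>
    let ⟨l, hl⟩ := hS p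
    let ⟨p', hp'⟩ := hSδ p hl
    ⟨(l, p'), hl, hp'⟩
  choose next hnextS hnextδ using hstep
  let q : ℕ → Q := fun n => (fun p => (next p).2)^[n] q₀
  refine ⟨q, fun n => (next (q n)).1, rfl, fun _ i _ => ⟨hnextS _, ?_⟩⟩
  simp only [q, Function.iterate_succ_apply']
  exact hnextδ _

theorem Reached.mono {N N' : ℕ} {q : ℕ → Q} (h : Reached H Os Ot N q) (hN : N ≤ N') :
    Reached H Os Ot N' q :=
  let ⟨K, hK, hsafe, htarget⟩ := h
  ⟨K, hK.trans hN, hsafe, htarget⟩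

theorem reached_succ_iff {N : ℕ} {q : ℕ → Q} (h : H (q 0) ∉ Ot) :
    Reached H Os Ot (N + 1) q ↔ H (q 0) ∈ Os ∧ Reached H Os Ot N (fun i => q (i + 1)) := by
  constructor
  · rintro ⟨_ | K, hK, hsafe, htarget⟩
    · exact absurd htarget h
    · exact ⟨hsafe 0 (Nat.zero_le _), K, by omega, fun k hk => hsafe (k + 1) (by omega), htarget⟩
  · rintro ⟨h0, K, hK, hsafe, htarget⟩
    refine ⟨K + 1, by omega, fun k hk => ?_, htarget⟩
    rcases k with _ | k
    · exact h0
    · exact hsafe k (by omega)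

theorem ReachesWithin.mono {q₀ : Q} {N N' : ℕ} (h : ReachesWithin δ S H Os Ot q₀ N) (hN : N ≤ N') :
    ReachesWithin δ S H Os Ot q₀ N' :=
  fun q l h0 hq => (h q l h0 (hq.mono hN)).mono hN

theorem reachesWithin_zero_of_mem (hOts : Ot ⊆ Os) {q₀ : Q} (h : H q₀ ∈ Ot) :
    ReachesWithin δ S H Os Ot q₀ 0 := by
  rintro q l rfl -
  exact ⟨0, le_rfl, fun k hk => Nat.le_zero.mp hk ▸ hOts h, h⟩

-- Even a trajectory of length `0` carries an action sequence `ℕ → L`.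
theorem not_reachesWithin_zero_of_notMem [Nonempty L] {q₀ : Q} (h : H q₀ ∉ Ot) :
    ¬ ReachesWithin δ S H Os Ot q₀ 0 := by
  intro h0
  obtain ⟨K, hK, -, htarget⟩ :=
    h0 (fun _ => q₀) (fun _ => Classical.ofNonempty) rfl (fun _ hi => absurd hi (Nat.not_lt_zero _))
  rw [Nat.le_zero.mp hK] at htarget
  exact h htarget

theorem not_reachesWithin_of_notMem (hS : ∀ q, (S q).Nonempty) (hSδ : ∀ q, S q ⊆ Enab δ q)
    {q₀ : Q} (h : H q₀ ∉ Os) (N : ℕ) : ¬ ReachesWithin δ S H Os Ot q₀ N := by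
  intro hN
  obtain ⟨q, l, rfl, hq⟩ := exists_forall_isTraj hS hSδ q₀
  obtain ⟨K, -, hsafe, -⟩ := hN q l rfl (hq N)
  exact h (hsafe 0 (Nat.zero_le K))

theorem reachesWithin_succ_iff {q₀ : Q} (hs : H q₀ ∈ Os) (ht : H q₀ ∉ Ot) {N : ℕ} :
    ReachesWithin δ S H Os Ot q₀ (N + 1) ↔
      ∀ l ∈ S q₀, ∀ q' ∈ δ q₀ l, ReachesWithin δ S H Os Ot q' N := by
  constructor
  · rintro h l₀ hl₀ _ hq' q l rfl hq
    exact ((reached_succ_iff ht).mp (h _ _ rfl (hq.cons hl₀ hq'))).2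
  · rintro h q l rfl hq
    obtain ⟨hl₀, hq'⟩ := hq 0 N.succ_pos
    exact (reached_succ_iff ht).mpr ⟨hs, h _ hl₀ _ hq' _ _ rfl hq.tail⟩

theorem entryTime_eq_sInf (q₀ : Q) : entryTime δ S H Os Ot q₀ =
    sInf {n : ℕ∞ | ∃ N : ℕ, n = N ∧ ReachesWithin δ S H Os Ot q₀ N} :=
  rfl

theorem entryTime_le_natCast_iff {q₀ : Q} {N : ℕ} :
    entryTime δ S H Os Ot q₀ ≤ N ↔ ReachesWithin δ S H Os Ot q₀ N := by
  refine ⟨fun h => ?_, fun h => sInf_le ⟨N, rfl, h⟩⟩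
  rw [entryTime_eq_sInf] at h
  have hne : {n : ℕ∞ | ∃ N : ℕ, n = N ∧ ReachesWithin δ S H Os Ot q₀ N}.Nonempty := by
    by_contra hempty
    rw [Set.not_nonempty_iff_eq_empty.mp hempty, sInf_empty] at h
    exact ENat.top_ne_natCast N (top_le_iff.mp h).symm
  obtain ⟨M, hM, hreach⟩ := csInf_mem hne
  rw [hM, Nat.cast_le] at h
  exact hreach.mono h

theorem entryTime_eq_top_of_notMem (hS : ∀ q, (S q).Nonempty) (hSδ : ∀ q, S q ⊆ Enab δ q)
    {q₀ : Q} (h : H q₀ ∉ Os) : entryTime δ S H Os Ot q₀ = ⊤ := by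
  by_contra hfin
  obtain ⟨N, hN⟩ := ENat.ne_top_iff_exists.mp hfin
  exact not_reachesWithin_of_notMem hS hSδ h N (entryTime_le_natCast_iff.mp hN.ge)

theorem entryTime_eq_zero_of_mem (hOts : Ot ⊆ Os) {q₀ : Q} (h : H q₀ ∈ Ot) :
    entryTime δ S H Os Ot q₀ = 0 :=
  nonpos_iff_eq_zero.mp <| entryTime_le_natCast_iff.mpr <| reachesWithin_zero_of_mem hOts h

theorem entryTime_eq_one_add_iSup [Nonempty L] {q₀ : Q}
    (hs : H q₀ ∈ Os) (ht : H q₀ ∉ Ot) :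
    entryTime δ S H Os Ot q₀ = 1 + ⨆ l ∈ S q₀, ⨆ q' ∈ δ q₀ l, entryTime δ S H Os Ot q' := by
  refine eq_of_forall_ge_iff fun n => ?_
  induction n using ENat.recTopCoe with
  | top => simp only [le_top]
  | coe N =>
    rcases N with _ | N
    · exact iff_of_false
        (entryTime_le_natCast_iff.not.mpr (not_reachesWithin_zero_of_notMem ht)) (by simp)
    · rw [entryTime_le_natCast_iff, reachesWithin_succ_iff hs ht, Nat.cast_succ, add_comm,
        ENat.add_le_add_iff_right ENat.one_ne_top]
      simp only [iSup_le_iff, entryTime_le_natCast_iff]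

end EntryTime

theorem entry_time_recursion_general {Q L O : Type*}
    (δ : Q → L → Set Q) (H : Q → O) (S : Q → Set L) (Os Ot : Set O)
    (hOts : Ot ⊆ Os)
    (hSne : ∀ q, (S q).Nonempty) (hSwd : ∀ q, S q ⊆ Enab δ q) :
    (∀ q : Q, H q ∉ Os → entryTime δ S H Os Ot q = ⊤) ∧
    (∀ q : Q, H q ∈ Ot → entryTime δ S H Os Ot q = 0) ∧
    (∀ q : Q, H q ∈ Os → H q ∉ Ot →
      entryTime δ S H Os Ot q =
        1 + ⨆ l ∈ S q, ⨆ q' ∈ δ q l, entryTime δ S H Os Ot q') := by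
  refine ⟨fun q => entryTime_eq_top_of_notMem hSne hSwd, fun q => entryTime_eq_zero_of_mem hOts,
    fun q hs ht => ?_⟩
  have : Nonempty L := ⟨(hSne q).some⟩
  exact entryTime_eq_one_add_iSup hs ht

theorem entry_time_recursion {Q L O : Type*}
    (δ : Q → L → Set Q) (H : Q → O) (S : Q → Set L) (Os Ot : Set O)
    (hOts : Ot ⊆ Os)
    (hnb : ∀ q : Q, ∃ l : L, (δ q l).Nonempty)
    (hSne : ∀ q, (S q).Nonempty) (hSwd : ∀ q, S q ⊆ Enab δ q) :
    (∀ q : Q, H q ∉ Os → entryTime δ S H Os Ot q = ⊤) ∧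
    (∀ q : Q, H q ∈ Ot → entryTime δ S H Os Ot q = 0) ∧
    (∀ q : Q, H q ∈ Os → H q ∉ Ot →
      entryTime δ S H Os Ot q =
        1 + ⨆ l ∈ S q, ⨆ q' ∈ δ q l, entryTime δ S H Os Ot q') :=
  entry_time_recursion_general δ H S Os Ot hOts hSne hSwd
end

section
/- Let R be an ε-approximate bisimulation relation between T₁ and T₂ with total projections, and let S_{2,Cε} be a controller for T₂ (everywhere non-empty and well-defined). Define J₂(q₂) = J(T_{2,S_{2,Cε}}, C_ε(O_s), C_ε(O_t), q₂) and the concretized controller S₁(q₁) = S_{2,Cε}(argmin_{q₂ ∈ R(q₁)} J₂(q₂)). Then S₁ is well-defined and for all q₁ ∈ Q₁: J(T_{1,S₁}, O_s, O_t, q₁) ≤ min_{q₂ ∈ R(q₁)} J₂(q₂). -/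
open Set

lemma exists_traj {Q L : Type*} (δ : Q → L → Set Q) (S : Q → Set L)
    (hne : ∀ q, (S q).Nonempty) (hwd : ∀ q, S q ⊆ Enab δ q) (q₀ : Q) :
    ∃ (r : ℕ → Q) (m : ℕ → L), r 0 = q₀ ∧
      ∀ i, m i ∈ S (r i) ∧ r (i + 1) ∈ δ (r i) (m i) := by
  have step : ∀ q : Q, ∃ p : L × Q, p.1 ∈ S q ∧ p.2 ∈ δ q p.1 := by
    intro q
    obtain ⟨l, hl⟩ := hne q
    obtain ⟨q', hq'⟩ := hwd q hl
    exact ⟨(l, q'), hl, hq'⟩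
  choose f hf1 hf2 using step
  refine ⟨fun n => Nat.rec q₀ (fun _ q => (f q).2) n,
    fun n => (f (Nat.rec q₀ (fun _ q => (f q).2) n)).1, rfl, fun i => ⟨hf1 _, hf2 _⟩⟩

lemma reachAll_mono {Q L O : Type*} (δ : Q → L → Set Q) (S : Q → Set L)
    (H : Q → O) (Os Ot : Set O) (q₀ : Q) {M N : ℕ} (hMN : M ≤ N)
    (h : ∀ q l, q 0 = q₀ → IsTraj δ S M q l → Reached H Os Ot M q) :
    ∀ q l, q 0 = q₀ → IsTraj δ S N q l → Reached H Os Ot N q := by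
  intro q l h0 ht
  obtain ⟨K, hK, h1, h2⟩ := h q l h0 (fun i hi => ht i (lt_of_lt_of_le hi hMN))
  exact ⟨K, le_trans hK hMN, h1, h2⟩

lemma entryTime_le_iff {Q L O : Type*} (δ : Q → L → Set Q) (S : Q → Set L)
    (H : Q → O) (Os Ot : Set O) (q₀ : Q) (N : ℕ) :
    entryTime δ S H Os Ot q₀ ≤ (N : ℕ∞) ↔
      ∀ q l, q 0 = q₀ → IsTraj δ S N q l → Reached H Os Ot N q := by
  constructor
  · intro h
    by_contra hP
    have h1 : ((N : ℕ∞) + 1) ≤ entryTime δ S H Os Ot q₀ := by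
      apply le_sInf
      rintro b ⟨M, rfl, hM⟩
      have hNM : N < M := by
        by_contra hle
        exact hP (reachAll_mono δ S H Os Ot q₀ (not_lt.1 hle) hM)
      exact_mod_cast Nat.succ_le_of_lt hNM
    have h2 := le_trans h1 h
    have : (N : ℕ) + 1 ≤ N := by exact_mod_cast h2
    omega
  · intro h
    exact sInf_le ⟨N, rfl, h⟩

lemma key_step {Q₁ Q₂ L O : Type*} [MetricSpace O]
    (ε : ℝ) (δ₁ : Q₁ → L → Set Q₁) (H₁ : Q₁ → O)
    (δ₂ : Q₂ → L → Set Q₂) (H₂ : Q₂ → O) (R : Set (Q₁ × Q₂))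
    (hR : ApproxBisim ε δ₁ H₁ δ₂ H₂ R)
    (Os Ot : Set O) (hOts : Ot ⊆ Os)
    (S₂ : Q₂ → Set L) (hS₂ne : ∀ q₂, (S₂ q₂).Nonempty)
    (hS₂wd : ∀ q₂, S₂ q₂ ⊆ Enab δ₂ q₂)
    (c : Q₁ → Q₂)
    (hc : ∀ q₁, (q₁, c q₁) ∈ R ∧ ∀ q₂, (q₁, q₂) ∈ R →
      entryTime δ₂ S₂ H₂ (contr ε Os) (contr ε Ot) (c q₁) ≤
      entryTime δ₂ S₂ H₂ (contr ε Os) (contr ε Ot) q₂) :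
    ∀ N : ℕ, ∀ q₁ : Q₁,
      (∀ r m, r 0 = c q₁ → IsTraj δ₂ S₂ N r m →
        Reached H₂ (contr ε Os) (contr ε Ot) N r) →
      ∀ q l, q 0 = q₁ → IsTraj δ₁ (fun q => S₂ (c q)) N q l →
        Reached H₁ Os Ot N q := by
  intro N
  induction N with
  | zero =>
    intro q₁ hP₂ q l h0 _
    obtain ⟨r, m, hr0, _⟩ := exists_traj δ₂ S₂ hS₂ne hS₂wd (c q₁)
    obtain ⟨K, hK, hOsall, hOt⟩ := hP₂ r m hr0 (fun i hi => absurd hi (Nat.not_lt_zero i))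
    have hK0 : K = 0 := Nat.le_zero.1 hK
    subst hK0
    rw [hr0] at hOt
    have hdist := (hR (q₁, c q₁) (hc q₁).1).1
    have hOt1 : H₁ q₁ ∈ Ot := hOt.2 (H₁ q₁) hdist
    refine ⟨0, le_refl _, fun k hk => ?_, by rwa [h0]⟩
    have : k = 0 := Nat.le_zero.1 hk
    subst this
    rw [h0]
    exact hOts hOt1
  | succ N ih =>
    intro q₁ hP₂ q l h0 ht
    have hdist := (hR (q₁, c q₁) (hc q₁).1).1
    -- H₂ (c q₁) ∈ contr ε Os from any trajectory
    obtain ⟨r, m, hr0, hrm⟩ := exists_traj δ₂ S₂ hS₂ne hS₂wd (c q₁)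
    obtain ⟨K, hK, hOsall, _⟩ := hP₂ r m hr0 (fun i _ => hrm i)
    have hOs0 : H₂ (c q₁) ∈ contr ε Os := by
      have := hOsall 0 (Nat.zero_le K); rwa [hr0] at this
    have hH₁Os : H₁ q₁ ∈ Os := hOs0.2 (H₁ q₁) hdist
    by_cases hOt0 : H₂ (c q₁) ∈ contr ε Ot
    · have hH₁Ot : H₁ q₁ ∈ Ot := hOt0.2 (H₁ q₁) hdist
      refine ⟨0, Nat.zero_le _, fun k hk => ?_, by rwa [h0]⟩
      have : k = 0 := Nat.le_zero.1 hk
      subst this; rwa [h0]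
    · have hl0 : l 0 ∈ S₂ (c (q 0)) := (ht 0 (Nat.succ_pos N)).1
      have hq1 : q 1 ∈ δ₁ (q 0) (l 0) := (ht 0 (Nat.succ_pos N)).2
      rw [h0] at hl0 hq1
      obtain ⟨p₁, hp₁δ, hp₁R⟩ := (hR (q₁, c q₁) (hc q₁).1).2.1 (l 0) (q 1) hq1
      -- every S₂-trajectory of length N from p₁ reaches
      have hP₂p : ∀ r m, r 0 = p₁ → IsTraj δ₂ S₂ N r m →
          Reached H₂ (contr ε Os) (contr ε Ot) N r := by
        intro r m hr0' htr
        have htr' : IsTraj δ₂ S₂ (N + 1)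
            (fun n => match n with | 0 => c q₁ | Nat.succ j => r j)
            (fun n => match n with | 0 => l 0 | Nat.succ j => m j) := by
          intro i hi
          cases i with
          | zero => exact ⟨hl0, by simpa [hr0'] using hp₁δ⟩
          | succ j => exact htr j (by omega)
        obtain ⟨K, hK, h1, h2⟩ := hP₂ _ _ rfl htr'
        cases K with
        | zero => exact absurd h2 hOt0
        | succ K' =>
          exact ⟨K', by omega, fun k hk => h1 (k + 1) (by omega), h2⟩
      have hEp : entryTime δ₂ S₂ H₂ (contr ε Os) (contr ε Ot) p₁ ≤ (N : ℕ∞) :=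
        (entryTime_le_iff δ₂ S₂ H₂ (contr ε Os) (contr ε Ot) p₁ N).2 hP₂p
      have hEc : entryTime δ₂ S₂ H₂ (contr ε Os) (contr ε Ot) (c (q 1)) ≤ (N : ℕ∞) :=
        le_trans ((hc (q 1)).2 p₁ hp₁R) hEp
      have hP₂c1 := (entryTime_le_iff δ₂ S₂ H₂ (contr ε Os) (contr ε Ot) (c (q 1)) N).1 hEc
      obtain ⟨K, hK, h1, h2⟩ := ih (q 1) hP₂c1 (fun n => q (n + 1)) (fun n => l (n + 1))
        rfl (fun i hi => ht (i + 1) (by omega))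
      refine ⟨K + 1, by omega, fun k hk => ?_, h2⟩
      cases k with
      | zero => rwa [h0]
      | succ j => exact h1 j (by omega)

theorem reachability_concretization {Q₁ Q₂ L O : Type*} [MetricSpace O]
    (ε : ℝ) (hε : 0 ≤ ε) (δ₁ : Q₁ → L → Set Q₁) (H₁ : Q₁ → O)
    (δ₂ : Q₂ → L → Set Q₂) (H₂ : Q₂ → O) (R : Set (Q₁ × Q₂))
    (hR : ApproxBisim ε δ₁ H₁ δ₂ H₂ R)
    (hRtot₁ : ∀ q₁, ∃ q₂, (q₁, q₂) ∈ R) (hRtot₂ : ∀ q₂, ∃ q₁, (q₁, q₂) ∈ R)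
    (hnb₁ : ∀ q : Q₁, ∃ l : L, (δ₁ q l).Nonempty)
    (hnb₂ : ∀ q : Q₂, ∃ l : L, (δ₂ q l).Nonempty)
    (Os Ot : Set O) (hOts : Ot ⊆ Os)
    (S₂ : Q₂ → Set L) (hS₂ne : ∀ q₂, (S₂ q₂).Nonempty)
    (hS₂wd : ∀ q₂, S₂ q₂ ⊆ Enab δ₂ q₂)
    (c : Q₁ → Q₂)
    (hc : ∀ q₁, (q₁, c q₁) ∈ R ∧ ∀ q₂, (q₁, q₂) ∈ R →
      entryTime δ₂ S₂ H₂ (contr ε Os) (contr ε Ot) (c q₁) ≤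
      entryTime δ₂ S₂ H₂ (contr ε Os) (contr ε Ot) q₂) :
    (∀ q₁ : Q₁, S₂ (c q₁) ⊆ Enab δ₁ q₁) ∧
    (∀ q₁ : Q₁, entryTime δ₁ (fun q => S₂ (c q)) H₁ Os Ot q₁ ≤
      ⨅ q₂ ∈ {q₂ : Q₂ | (q₁, q₂) ∈ R},
        entryTime δ₂ S₂ H₂ (contr ε Os) (contr ε Ot) q₂) := by
  constructor
  · intro q₁ l hl
    obtain ⟨q₂', hq₂'⟩ := hS₂wd (c q₁) hl
    obtain ⟨q₁', hq₁', _⟩ := (hR (q₁, c q₁) (hc q₁).1).2.2 l q₂' hq₂'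
    exact ⟨q₁', hq₁'⟩
  · intro q₁
    refine le_iInf fun q₂ => le_iInf fun hq₂ => ?_
    refine le_trans ?_ ((hc q₁).2 q₂ hq₂)
    apply le_sInf
    rintro b ⟨N, rfl, hN⟩
    exact sInf_le ⟨N, rfl,
      key_step ε δ₁ H₁ δ₂ H₂ R hR Os Ot hOts S₂ hS₂ne hS₂wd c hc N q₁ hN⟩
end
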